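/- arXiv:1206.1143 — 2 statements merged into one kernel-verified Lean document; each statement's English description precedes it below -/
import Mathlib

section
/- There exists k ∈ ℕ such that every horizontal geodesic of the induced augmented tree (X, 𝔈) has length at most k; that is, the lengths of horizontal geodesics are uniformly bounded. -/
open Metric Set Filter

attribute [local instance] Classical.propDecidable

noncomputable section

namespace MoranPaper

/-- Points of `ℝ^d`. -/
abbrev Pt (d : ℕ) := EuclideanSpace ℝ (Fin d)

/-- `w` is an admissible word: the letter at (0-indexed) position `j`
(corresponding to step `j+1`) lies in `[1, n j]`, where `n j` encodes `n_{j+1}`. -/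
def IsWord (n : ℕ → ℕ) (w : List ℕ) : Prop :=
  ∀ j (h : j < w.length), 1 ≤ w.get ⟨j, h⟩ ∧ w.get ⟨j, h⟩ ≤ n j

/-- The set `D_k` of words of length `k`. -/
def WordsLen (n : ℕ → ℕ) (k : ℕ) : Set (List ℕ) := {w | IsWord n w ∧ w.length = k}

/-- A Moran structure on the data `(J, (n_k), (r_k))`:  a family of sets `J_w`
indexed by words, with `J_∅ = J`, each `J_w` a similar copy of `J`, children
contained in the parent with pairwise disjoint interiors, and prescribed
diameter ratios. -/
structure MoranStructure (d : ℕ) (J : Set (Pt d)) (n : ℕ → ℕ) (r : ℕ → ℝ) where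
  Jset : List ℕ → Set (Pt d)
  root_eq : Jset [] = J
  similar : ∀ w, IsWord n w → ∃ (S : Pt d → Pt d) (c : ℝ), 0 < c ∧
      (∀ x y, dist (S x) (S y) = c * dist x y) ∧ Jset w = S '' J
  nested : ∀ w, IsWord n w → ∀ a, 1 ≤ a → a ≤ n w.length →
      Jset (w ++ [a]) ⊆ Jset w
  disjoint_int : ∀ w, IsWord n w → ∀ a b, 1 ≤ a → a ≤ n w.length →
      1 ≤ b → b ≤ n w.length → a ≠ b →
      interior (Jset (w ++ [a])) ∩ interior (Jset (w ++ [b])) = ∅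
  diam_ratio : ∀ w, IsWord n w → ∀ a, 1 ≤ a → a ≤ n w.length →
      Metric.diam (Jset (w ++ [a])) = r w.length * Metric.diam (Jset w)

/-- Standing hypotheses on the Moran data; `R` plays the role of `r = inf_k r_k > 0`. -/
structure MoranData (d : ℕ) (J : Set (Pt d)) (n : ℕ → ℕ) (r : ℕ → ℝ) (R : ℝ) : Prop where
  dim_pos : 1 ≤ d
  compact : IsCompact J
  int_nonempty : (interior J).Nonempty
  two_le : ∀ k, 2 ≤ n k
  r_pos : ∀ k, 0 < r k
  r_lt_one : ∀ k, r k < 1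
  nr_le : ∀ k, (n k : ℝ) * r k ≤ 1
  R_pos : 0 < R
  R_inf : R = ⨅ k, r k

/-- The Moran set `E = ⋂_k ⋃_{w ∈ D_k} J_w`. -/
def MoranSet {d : ℕ} {J : Set (Pt d)} {n : ℕ → ℕ} {r : ℕ → ℝ}
    (M : MoranStructure d J n r) : Set (Pt d) :=
  ⋂ k, ⋃ w ∈ WordsLen n k, M.Jset w

/-- The product `r_1 ⋯ r_k`. -/
def prodR (r : ℕ → ℝ) (k : ℕ) : ℝ := ∏ j ∈ Finset.range k, r j

/-- The level `X_m`:  `X_0 = {∅}`, and for `m ≥ 1`,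
`X_m = {w : r_1⋯r_k ≤ R^m < r_1⋯r_{k-1}}` where `k` is the length of `w`. -/
def XLevel (n : ℕ → ℕ) (r : ℕ → ℝ) (R : ℝ) (m : ℕ) : Set (List ℕ) :=
  if m = 0 then {([] : List ℕ)}
  else {w | IsWord n w ∧ prodR r w.length ≤ R ^ m ∧ R ^ m < prodR r (w.length - 1)}

/-- The vertex set `X = ⋃_m X_m`. -/
def XV (n : ℕ → ℕ) (r : ℕ → ℝ) (R : ℝ) : Set (List ℕ) := ⋃ m, XLevel n r R m

/-- `v` is the parent (first ancestor) of `u`:  `v` is the initial segment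
of `u` lying one level above `u`. -/
def IsParent (n : ℕ → ℕ) (r : ℕ → ℝ) (R : ℝ) (v u : List ℕ) : Prop :=
  v ≠ u ∧ v <+: u ∧ ∃ m, 1 ≤ m ∧ u ∈ XLevel n r R m ∧ v ∈ XLevel n r R (m - 1)

/-- Vertical edge relation `𝔈_v` (as an unordered relation). -/
def Evert (n : ℕ → ℕ) (r : ℕ → ℝ) (R : ℝ) (u v : List ℕ) : Prop :=
  IsParent n r R u v ∨ IsParent n r R v u

variable {d : ℕ} {J : Set (Pt d)} {n : ℕ → ℕ} {r : ℕ → ℝ}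

/-- Horizontal edge relation `𝔈_h`: distinct words on a common level `X_m`, `m ≥ 1`,
whose Moran pieces intersect. -/
def Ehor (M : MoranStructure d J n r) (R : ℝ) (u v : List ℕ) : Prop :=
  u ≠ v ∧ ∃ m, 1 ≤ m ∧ u ∈ XLevel n r R m ∧ v ∈ XLevel n r R m ∧
    (M.Jset u ∩ M.Jset v).Nonempty

/-- The induced augmented tree `(X, 𝔈)`, `𝔈 = 𝔈_v ∪ 𝔈_h`, as a graph on all words
(words outside `X` are isolated vertices). -/
def AugGraph (M : MoranStructure d J n r) (R : ℝ) : SimpleGraph (List ℕ) where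
  Adj u v := Evert n r R u v ∨ Ehor M R u v
  symm := by
    constructor
    rintro u v (h | ⟨hne, m, hm, hu, hv, hJ⟩)
    · exact Or.inl h.symm
    · exact Or.inr ⟨hne.symm, m, hm, hv, hu, by rwa [Set.inter_comm]⟩
  loopless := by
    constructor
    rintro u ((⟨h, -⟩ | ⟨h, -⟩) | ⟨h, -⟩) <;> exact h rfl

/-- The tree `(X, 𝔈_v)` with only the vertical edges. -/
def TreeGraph (n : ℕ → ℕ) (r : ℕ → ℝ) (R : ℝ) : SimpleGraph (List ℕ) where
  Adj u v := Evert n r R u v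
  symm := ⟨fun _ _ h => h.symm⟩
  loopless := by constructor; rintro u (⟨h, -⟩ | ⟨h, -⟩) <;> exact h rfl

/-- The graph `(X, 𝔈_h)` with only the horizontal edges. -/
def HorGraph (M : MoranStructure d J n r) (R : ℝ) : SimpleGraph (List ℕ) where
  Adj u v := Ehor M R u v
  symm := by
    constructor
    rintro u v ⟨hne, m, hm, hu, hv, hJ⟩
    exact ⟨hne.symm, m, hm, hv, hu, by rwa [Set.inter_comm]⟩
  loopless := by constructor; rintro u ⟨h, -⟩; exact h rfl

/-- Gromov product `⟨x,y⟩ = (d(o,x) + d(o,y) - d(x,y))/2` with respect to a base point `o`. -/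
def gromovD {V : Type*} (G : SimpleGraph V) (o x y : V) : ℝ :=
  ((G.dist o x : ℝ) + (G.dist o y : ℝ) - (G.dist x y : ℝ)) / 2

/-- Condition (H): there is `C' > 0` such that on every level `X_m` (`m ≥ 1`),
two pieces either intersect or are at distance at least `C' R^m`. -/
def CondH (M : MoranStructure d J n r) (R : ℝ) : Prop :=
  ∃ C' : ℝ, 0 < C' ∧ ∀ m, 1 ≤ m → ∀ u ∈ XLevel n r R m, ∀ v ∈ XLevel n r R m,
    (M.Jset u ∩ M.Jset v).Nonempty ∨
    ∀ p ∈ M.Jset u, ∀ q ∈ M.Jset v, C' * R ^ m ≤ dist p q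

/-- `T` is a horizontal connected component: a maximal subset of some level `X_m`
which is connected in the horizontal graph. -/
def IsHCC (M : MoranStructure d J n r) (R : ℝ) (T : Set (List ℕ)) : Prop :=
  ∃ m, T ⊆ XLevel n r R m ∧ ((HorGraph M R).induce T).Connected ∧
    ∀ T', T ⊆ T' → T' ⊆ XLevel n r R m → ((HorGraph M R).induce T').Connected → T' = T

/-- The common suffix set `Σ_m` of the level `X_m`: words `w` with `uw ∈ X_{m+1}`
for (some, equivalently all) `u ∈ X_m`. -/
def SigmaSet (n : ℕ → ℕ) (r : ℕ → ℝ) (R : ℝ) (m : ℕ) : Set (List ℕ) :=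
  {w | ∃ u ∈ XLevel n r R m, u ++ w ∈ XLevel n r R (m + 1)}

/-- The offspring set `TΣ_m ⊆ X_{m+1}` of a set `T ⊆ X_m`. -/
def TSigma (n : ℕ → ℕ) (r : ℕ → ℝ) (R : ℝ) (m : ℕ) (T : Set (List ℕ)) : Set (List ℕ) :=
  {x | ∃ u ∈ T, ∃ w ∈ SigmaSet n r R m, x = u ++ w}

/-- The augmented tree is rearrangeable:  horizontal connected components have
uniformly bounded cardinality, and for every horizontal connected component `T ⊆ X_m`
with `#T = b`, the offspring set `TΣ_m` can be partitioned into `b` groups (indexed by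
the elements of `T`), each group being a union of horizontal connected components and
having exactly `#Σ_m` elements. -/
def Rearrangeable (M : MoranStructure d J n r) (R : ℝ) : Prop :=
  (∃ L : ℕ, ∀ T, IsHCC M R T → T.Finite ∧ T.ncard ≤ L) ∧
  ∀ m T, T ⊆ XLevel n r R m → IsHCC M R T →
    ∃ g : List ℕ → List ℕ,
      (∀ x ∈ TSigma n r R m T, g x ∈ T) ∧
      (∀ Z, IsHCC M R Z → Z ⊆ TSigma n r R m T → ∀ x ∈ Z, ∀ y ∈ Z, g x = g y) ∧
      (∀ i ∈ T, {x ∈ TSigma n r R m T | g x = i}.ncard = (SigmaSet n r R m).ncard)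

/-- `C` is a (topological) connected component of `A`. -/
def IsRelCC {α : Type*} [TopologicalSpace α] (C A : Set α) : Prop :=
  ∃ x ∈ A, C = connectedComponentIn A x

/-- Condition (v): there is `L` such that any `T ⊆ D_{k-1}` for which `⋃_{i∈T} J_i`
is a connected component of `⋃_{i∈D_{k-1}} J_i` satisfies `#T ≤ L`. -/
def CondV (M : MoranStructure d J n r) : Prop :=
  ∃ L : ℕ, ∀ k, 1 ≤ k → ∀ T ⊆ WordsLen n (k - 1),
    IsRelCC (⋃ i ∈ T, M.Jset i) (⋃ i ∈ WordsLen n (k - 1), M.Jset i) →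
    T.Finite ∧ T.ncard ≤ L

/-- Condition (vi): for any such `T` (with `#T = b`), the connected components of
`⋃_{i∈T} ⋃_{j=1}^{n_k} J_{ij}` can be partitioned into `b` groups (indexed by the
elements of `T`) so that the union of the components in each group is a union of
exactly `n_k` of the sets `J_{ij}`. -/
def CondVI (M : MoranStructure d J n r) : Prop :=
  ∀ k, 1 ≤ k → ∀ T ⊆ WordsLen n (k - 1),
    IsRelCC (⋃ i ∈ T, M.Jset i) (⋃ i ∈ WordsLen n (k - 1), M.Jset i) →
    ∃ f : Set (Pt d) → List ℕ,
      (∀ C, IsRelCC C (⋃ u ∈ T, ⋃ j ∈ Set.Icc 1 (n (k - 1)), M.Jset (u ++ [j])) → f C ∈ T) ∧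
      ∀ i ∈ T, ∃ W : Finset (List ℕ × ℕ),
        (∀ p ∈ W, p.1 ∈ T ∧ 1 ≤ p.2 ∧ p.2 ≤ n (k - 1)) ∧
        W.card = n (k - 1) ∧
        (⋃ C ∈ {C | IsRelCC C (⋃ u ∈ T, ⋃ j ∈ Set.Icc 1 (n (k - 1)), M.Jset (u ++ [j]))
            ∧ f C = i}, C)
          = ⋃ p ∈ W, M.Jset (p.1 ++ [p.2])

/-- A geodesic ray of the induced augmented tree: `u_m ∈ X_m` and `u_m = (u_{m+1})⁻¹`. -/
def IsRay (n : ℕ → ℕ) (r : ℕ → ℝ) (R : ℝ) (u : ℕ → List ℕ) : Prop :=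
  (∀ m, u m ∈ XLevel n r R m) ∧ ∀ m, IsParent n r R (u m) (u (m + 1))

/-- Geodesic rays as a type. -/
def MRay (n : ℕ → ℕ) (r : ℕ → ℝ) (R : ℝ) := {u : ℕ → List ℕ // IsRay n r R u}

/-- `t(ξ,η) = liminf_m ⟨u_m, v_m⟩`, valued in `EReal`. -/
def tLim {V : Type*} (G : SimpleGraph V) (o : V) (u v : ℕ → V) : EReal :=
  Filter.liminf (fun m => ((gromovD G o (u m) (v m) : ℝ) : EReal)) Filter.atTop

/-- `R ^ t` for `t ∈ EReal`, with the convention `R ^ ∞ = 0`. -/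
def rpowE (R : ℝ) (t : EReal) : ℝ := if t = ⊤ then 0 else R ^ t.toReal

/-- The hyperbolic boundary of the induced augmented tree: equivalence classes of
geodesic rays, two rays being equivalent when `t(ξ,η) = ∞`. -/
def MBoundary (M : MoranStructure d J n r) (R : ℝ) :=
  Quot (fun ξ η : MRay n r R => tLim (AugGraph M R) [] ξ.1 η.1 = ⊤)

/-- The class of a ray in the hyperbolic boundary. -/
def mkB (M : MoranStructure d J n r) (R : ℝ) (ξ : MRay n r R) : MBoundary M R :=
  Quot.mk _ ξ

/-- The metric `ρ_a` on the hyperbolic boundary: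
`ρ_a(ξ̄,η̄) = exp(-a · inf{t(ξ,η) : ξ ∈ ξ̄, η ∈ η̄})` for distinct classes, and `0` otherwise. -/
def mrho (M : MoranStructure d J n r) (R a : ℝ) (p q : MBoundary M R) : ℝ :=
  if p = q then 0
  else Real.exp (-a * (sInf {s : EReal | ∃ ξ η : MRay n r R,
    mkB M R ξ = p ∧ mkB M R η = q ∧ s = tLim (AugGraph M R) [] ξ.1 η.1}).toReal)

/-- An abstract augmented tree in the sense of Kaimanovich: a rooted tree (encoded
by a parent map and a level function) together with a symmetric horizontal edge
relation `Eh` joining distinct vertices of a common level whose parents are equal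
or horizontally joined. -/
structure AugmentedTree (V : Type*) where
  root : V
  parent : V → V
  lvl : V → ℕ
  lvl_root : lvl root = 0
  lvl_parent : ∀ x, x ≠ root → lvl (parent x) + 1 = lvl x
  Eh : V → V → Prop
  Eh_symm : ∀ x y, Eh x y → Eh y x
  Eh_ne : ∀ x y, Eh x y → x ≠ y
  Eh_lvl : ∀ x y, Eh x y → lvl x = lvl y
  Eh_parent : ∀ x y, Eh x y → parent x = parent y ∨ Eh (parent x) (parent y)

namespace AugmentedTree

variable {V : Type*} (T : AugmentedTree V)

/-- The vertical (tree) edge relation. -/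
def Ev (x y : V) : Prop :=
  (x ≠ T.root ∧ T.parent x = y) ∨ (y ≠ T.root ∧ T.parent y = x)

/-- The graph `(X, 𝔈)`, `𝔈 = 𝔈_v ∪ 𝔈_h`. -/
def graph : SimpleGraph V where
  Adj x y := x ≠ y ∧ (T.Ev x y ∨ T.Eh x y)
  symm := by
    constructor
    rintro x y ⟨hne, h | h⟩
    · exact ⟨hne.symm, Or.inl h.symm⟩
    · exact ⟨hne.symm, Or.inr (T.Eh_symm x y h)⟩
  loopless := ⟨fun _ h => h.1 rfl⟩

/-- Gromov product `⟨x,y⟩ = (|x| + |y| - d(x,y))/2` (one has `d(o,x) = |x| = lvl x`). -/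
def gromov (x y : V) : ℝ :=
  ((T.lvl x : ℝ) + (T.lvl y : ℝ) - (T.graph.dist x y : ℝ)) / 2

/-- Gromov hyperbolicity. -/
def Hyperbolic : Prop :=
  ∃ δ : ℝ, 0 ≤ δ ∧ ∀ x y z : V,
    min (T.gromov x z) (T.gromov z y) - δ ≤ T.gromov x y

/-- A geodesic ray from the root: `x_0 = o` and `x_m = (x_{m+1})⁻¹`. -/
def IsRayT (x : ℕ → V) : Prop := x 0 = T.root ∧ ∀ m, T.parent (x (m + 1)) = x m

/-- Geodesic rays from the root, as a type. -/
def Ray := {x : ℕ → V // T.IsRayT x}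

/-- `t(ξ,η) = liminf_m ⟨x_m, y_m⟩`, valued in `EReal`. -/
def tvalT (ξ η : T.Ray) : EReal :=
  Filter.liminf (fun m => ((T.gromov (ξ.1 m) (η.1 m) : ℝ) : EReal)) Filter.atTop

/-- The hyperbolic boundary: classes of geodesic rays, two rays being equivalent
when `t(ξ,η) = ∞`. -/
def Boundary := Quot (fun ξ η : T.Ray => T.tvalT ξ η = ⊤)

/-- The class of a ray in the boundary. -/
def mkBd (ξ : T.Ray) : T.Boundary := Quot.mk _ ξ

/-- The metric `ρ_a` on the hyperbolic boundary. -/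
def rho (a : ℝ) (p q : T.Boundary) : ℝ :=
  if p = q then 0
  else Real.exp (-a * (sInf {s : EReal | ∃ ξ η : T.Ray,
    T.mkBd ξ = p ∧ T.mkBd η = q ∧ s = T.tvalT ξ η}).toReal)

end AugmentedTree

end MoranPaper

end

/-!
A horizontal geodesic `p` of length `L` in `X_m` is a chain of `L + 1` pieces of diameter at
most `R^m diam J`, so it stays within distance `(L + 1) R^m diam J` of a point. Go up `k + 1`
levels, where `(L + 1) R^k ≤ 1`: the ancestors of the vertices of `p` are pieces of diameter at
most `R^(m-k-1) diam J` with disjoint interiors, each containing a ball of radius comparable to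
`R^(m-k)`, and all of them meet that neighbourhood, so a volume count bounds their number by a
constant `Q` independent of `L` and `m`. They carry a horizontal walk joining the ancestors of
the endpoints, hence `L = d(x, y) ≤ 2(k + 1) + Q`; taking `k ≈ log_{1/R} L` gives
`L = O(log L)`, which bounds `L`.
-/

theorem List.exists_append_cons_of_not_prefix {α : Type*} :
    ∀ {a b : List α}, ¬ a <+: b → ¬ b <+: a →
    ∃ (u : List α) (i j : α) (ta tb : List α), a = u ++ i :: ta ∧ b = u ++ j :: tb ∧ i ≠ j
  | [], _, h, _ | _ :: _, [], _, h => absurd List.nil_prefix h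
  | x :: a, y :: b, h₁, h₂ => by
    rcases eq_or_ne x y with rfl | hxy
    · obtain ⟨u, i, j, ta, tb, rfl, rfl, hij⟩ := List.exists_append_cons_of_not_prefix
        (fun h => h₁ (List.cons_prefix_cons.mpr ⟨rfl, h⟩))
        (fun h => h₂ (List.cons_prefix_cons.mpr ⟨rfl, h⟩))
      exact ⟨x :: u, i, j, ta, tb, rfl, rfl, hij⟩
    · exact ⟨[], x, y, a, b, rfl, rfl, hxy⟩

namespace MoranPaper

open Metric Set MeasureTheory Module
open scoped Pointwise

section Similarity

variable {E : Type*} [NormedAddCommGroup E] [NormedSpace ℝ E] {S : E → E} {c : ℝ}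

lemma isometry_inv_smul_of_dist_eq (hc : 0 < c) (hS : ∀ x y, dist (S x) (S y) = c * dist x y) :
    Isometry fun x => c⁻¹ • S x :=
  Isometry.of_dist_eq fun x y => by
    rw [dist_smul₀, hS, norm_inv, Real.norm_of_nonneg hc.le, inv_mul_cancel_left₀ hc.ne']

lemma diam_image_of_dist_eq (hc : 0 < c) (hS : ∀ x y, dist (S x) (S y) = c * dist x y)
    (s : Set E) : diam (S '' s) = c * diam s := by
  have hS' : S '' s = c • ((fun x => c⁻¹ • S x) '' s) := by
    rw [← image_smul, image_image]
    simp only [smul_inv_smul₀ hc.ne']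
  rw [hS', diam_smul₀, (isometry_inv_smul_of_dist_eq hc hS).diam_image,
    Real.norm_of_nonneg hc.le]

variable [StrictConvexSpace ℝ E] [FiniteDimensional ℝ E]

lemma surjective_of_dist_eq (hc : 0 < c) (hS : ∀ x y, dist (S x) (S y) = c * dist x y) :
    Function.Surjective S := by
  have : Inhabited E := ⟨0⟩
  intro y
  obtain ⟨x, hx⟩ := ((isometry_inv_smul_of_dist_eq hc hS).affineIsometryOfStrictConvexSpace
    |>.toAffineIsometryEquiv rfl).surjective (c⁻¹ • y)
  exact ⟨x, smul_right_injective E (inv_ne_zero hc.ne') hx⟩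

lemma ball_subset_image_ball (hc : 0 < c) (hS : ∀ x y, dist (S x) (S y) = c * dist x y)
    (z : E) (ρ : ℝ) : ball (S z) (c * ρ) ⊆ S '' ball z ρ := by
  intro y hy
  obtain ⟨x, rfl⟩ := surjective_of_dist_eq hc hS y
  rw [mem_ball, hS, mul_lt_mul_iff_right₀ hc] at hy
  exact ⟨x, hy, rfl⟩

end Similarity

lemma card_mul_pow_le_of_pairwiseDisjoint_ball {E ι : Type*} [NormedAddCommGroup E]
    [NormedSpace ℝ E] [FiniteDimensional ℝ E] (F : Finset ι) (c : ι → E) {ε U : ℝ} (q : E)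
    (hε : 0 < ε) (hU : 0 < U) (hdisj : (F : Set ι).PairwiseDisjoint fun a => ball (c a) ε)
    (hsub : ∀ a ∈ F, ball (c a) ε ⊆ ball q U) :
    (F.card : ℝ) * ε ^ finrank ℝ E ≤ U ^ finrank ℝ E := by
  let _ : MeasurableSpace E := borel E
  have : BorelSpace E := ⟨rfl⟩
  let μ : Measure E := Measure.addHaar
  have hle : ∑ a ∈ F, μ (ball (c a) ε) ≤ μ (ball q U) := by
    rw [← measure_biUnion_finset hdisj fun a _ => measurableSet_ball]
    exact measure_mono (iUnion₂_subset hsub)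
  simp only [Measure.addHaar_ball_of_pos μ _ hε, Measure.addHaar_ball_of_pos μ _ hU,
    Finset.sum_const, nsmul_eq_mul, ← mul_assoc] at hle
  rw [ENNReal.mul_le_mul_iff_left (measure_ball_pos μ _ one_pos).ne' measure_ball_lt_top.ne,
    ← ENNReal.ofReal_natCast, ← ENNReal.ofReal_mul (by positivity),
    ENNReal.ofReal_le_ofReal_iff (by positivity)] at hle
  exact hle

lemma dist_le_of_chain {V X : Type*} [PseudoMetricSpace X] {G : SimpleGraph V} (A : V → Set X)
    {D : ℝ} : ∀ {x y : V} (p : G.Walk x y),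
    (∀ v ∈ p.support, Bornology.IsBounded (A v) ∧ diam (A v) ≤ D) →
    (∀ e ∈ p.darts, (A e.fst ∩ A e.snd).Nonempty) →
    ∀ q ∈ A x, ∀ v ∈ p.support, ∀ pt ∈ A v, dist pt q ≤ (p.length + 1) * D
  | u, _, .nil, hbd, _, q, hq, v, hv, pt, hpt => by
    rw [SimpleGraph.Walk.support_nil, List.mem_singleton] at hv
    subst hv
    obtain ⟨hb, hd⟩ := hbd v (by simp)
    simpa using (dist_le_diam_of_mem hb hpt hq).trans hd
  | u, _, .cons (v := w) h p, hbd, hds, q, hq, v, hv, pt, hpt => by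
    obtain ⟨hb, hd⟩ := hbd u (by simp)
    obtain ⟨y, hyu, hyw⟩ := hds ⟨(u, w), h⟩ (by simp)
    have hq_near : ∀ pt ∈ A u, dist pt q ≤ D := fun pt hpt =>
      (dist_le_diam_of_mem hb hpt hq).trans hd
    have hD : 0 ≤ D := diam_nonneg.trans hd
    rw [SimpleGraph.Walk.length_cons, Nat.cast_succ]
    rcases List.mem_cons.mp (SimpleGraph.Walk.support_cons h p ▸ hv) with rfl | hv
    · nlinarith [hq_near pt hpt, (Nat.cast_nonneg p.length : (0 : ℝ) ≤ _)]
    · have ih := dist_le_of_chain A p (fun v hv => hbd v (by simp [hv]))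
        (fun e he => hds e (by simp [he])) y hyw v hv pt hpt
      linarith [dist_triangle pt y q, hq_near y hyu]

lemma exists_nat_bound_of_le_mul_log_add {a : ℝ} (ha : 0 < a) (b : ℝ) :
    ∃ K : ℕ, ∀ L : ℕ, (L : ℝ) ≤ a * Real.log (L + 1) + b → L ≤ K := by
  refine ⟨⌈1 + 2 * a * (Real.log (2 * a) - 1) + 2 * b⌉₊, fun L hL => ?_⟩
  -- `log` lies below its tangent line at `2a`, whose slope `1 / (2a)` halves `a * log`
  have htan : Real.log (L + 1) ≤ (L + 1) / (2 * a) - 1 + Real.log (2 * a) := by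
    have h := Real.log_le_sub_one_of_pos (x := (L + 1) / (2 * a)) (by positivity)
    rw [Real.log_div (by positivity) (by positivity)] at h
    linarith
  have hL' : (L : ℝ) ≤ (L + 1) / 2 + a * (Real.log (2 * a) - 1) + b :=
    calc (L : ℝ) ≤ a * Real.log (L + 1) + b := hL
      _ ≤ a * ((L + 1) / (2 * a) - 1 + Real.log (2 * a)) + b := by gcongr
      _ = (L + 1) / 2 + a * (Real.log (2 * a) - 1) + b := by field_simp; ring
  exact_mod_cast (show (L : ℝ) ≤ 1 + 2 * a * (Real.log (2 * a) - 1) + 2 * b by linarith).trans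
    (Nat.le_ceil _)

lemma exists_mul_pow_le_one {R x : ℝ} (hR0 : 0 < R) (hR1 : R < 1) (hx : 1 ≤ x) :
    ∃ k : ℕ, x * R ^ k ≤ 1 ∧ (k : ℝ) ≤ Real.log x / Real.log R⁻¹ + 1 := by
  have hlog : 0 < Real.log R⁻¹ := Real.log_pos (one_lt_inv₀ hR0 |>.mpr hR1)
  set k := ⌈Real.log x / Real.log R⁻¹⌉₊
  refine ⟨k, ?_, (Nat.ceil_lt_add_one (div_nonneg (Real.log_nonneg hx) hlog.le)).le⟩
  have hlogx : Real.log x ≤ Real.log (R⁻¹ ^ k) := by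
    rw [Real.log_pow]
    exact (div_le_iff₀ hlog).mp (Nat.le_ceil _)
  have hxk : x ≤ (R ^ k)⁻¹ := by
    rw [← inv_pow]
    exact (Real.log_le_log_iff (by positivity) (by positivity)).mp hlogx
  calc x * R ^ k ≤ (R ^ k)⁻¹ * R ^ k := by gcongr
    _ = 1 := inv_mul_cancel₀ (by positivity)

lemma diam_pos_of_interior_nonempty {E : Type*} [NormedAddCommGroup E] [NormedSpace ℝ E]
    [Nontrivial E] {s : Set E} (hs : Bornology.IsBounded s) (h : (interior s).Nonempty) :
    0 < diam s := by
  obtain ⟨z, hz⟩ := h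
  obtain ⟨ρ, hρ, hball⟩ := Metric.mem_nhds_iff.mp (mem_interior_iff_mem_nhds.mp hz)
  calc 0 < 2 * ρ := by positivity
    _ = diam (ball z ρ) := (diam_ball_eq z hρ.le).symm
    _ ≤ diam s := diam_mono hball hs

variable {d : ℕ} {J : Set (Pt d)} {n : ℕ → ℕ} {r : ℕ → ℝ} {R : ℝ}

lemma MoranData.R_le_r (hD : MoranData d J n r R) (k : ℕ) : R ≤ r k := by
  rw [hD.R_inf]
  exact ciInf_le ⟨0, by rintro x ⟨j, rfl⟩; exact (hD.r_pos j).le⟩ k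

lemma MoranData.R_lt_one (hD : MoranData d J n r R) : R < 1 :=
  (hD.R_le_r 0).trans_lt (hD.r_lt_one 0)

lemma MoranData.diam_pos (hD : MoranData d J n r R) : 0 < diam J := by
  have : Nonempty (Fin d) := ⟨⟨0, hD.dim_pos⟩⟩
  exact diam_pos_of_interior_nonempty hD.compact.isBounded hD.int_nonempty

@[simp] lemma prodR_zero : prodR r 0 = 1 := Finset.prod_range_zero _

lemma prodR_succ (k : ℕ) : prodR r (k + 1) = prodR r k * r k := Finset.prod_range_succ _ _

lemma prodR_pos (hr : ∀ k, 0 < r k) (k : ℕ) : 0 < prodR r k :=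
  Finset.prod_pos fun j _ => hr j

lemma prodR_antitone (hr0 : ∀ k, 0 < r k) (hr1 : ∀ k, r k ≤ 1) : Antitone (prodR r) :=
  antitone_nat_of_succ_le fun k => by
    rw [prodR_succ]
    exact mul_le_of_le_one_right (prodR_pos hr0 k).le (hr1 k)

lemma mem_XLevel_iff {m : ℕ} (hm : m ≠ 0) {w : List ℕ} :
    w ∈ XLevel n r R m ↔
      IsWord n w ∧ prodR r w.length ≤ R ^ m ∧ R ^ m < prodR r (w.length - 1) := by
  rw [XLevel, if_neg hm]
  rfl

@[simp] lemma mem_XLevel_zero {w : List ℕ} : w ∈ XLevel n r R 0 ↔ w = [] := by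
  simp [XLevel]

lemma length_pos_of_mem_XLevel (hD : MoranData d J n r R) {m : ℕ} (hm : m ≠ 0) {w : List ℕ}
    (hw : w ∈ XLevel n r R m) : 0 < w.length := by
  refine Nat.pos_of_ne_zero fun h0 => ?_
  have h := ((mem_XLevel_iff hm).mp hw).2.1
  rw [h0, prodR_zero] at h
  exact (pow_lt_one₀ hD.R_pos.le hD.R_lt_one hm).not_ge h

lemma pow_succ_lt_prodR_of_mem_XLevel (hD : MoranData d J n r R) {m : ℕ} (hm : m ≠ 0)
    {w : List ℕ} (hw : w ∈ XLevel n r R m) : R ^ (m + 1) < prodR r w.length := by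
  obtain ⟨k, hk⟩ := Nat.exists_eq_add_one.mpr (length_pos_of_mem_XLevel hD hm hw)
  have h := ((mem_XLevel_iff hm).mp hw).2.2
  rw [hk, Nat.add_sub_cancel] at h
  rw [hk, prodR_succ, pow_succ]
  exact mul_lt_mul h (hD.R_le_r k) hD.R_pos (prodR_pos hD.r_pos k).le

lemma level_eq_of_mem_XLevel (hD : MoranData d J n r R) {m m' : ℕ} (hm : m ≠ 0) (hm' : m' ≠ 0)
    {w : List ℕ} (h : w ∈ XLevel n r R m) (h' : w ∈ XLevel n r R m') : m = m' := by
  have key : ∀ {a b : ℕ}, a ≠ 0 → b ≠ 0 → w ∈ XLevel n r R a → w ∈ XLevel n r R b → b ≤ a := by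
    intro a b ha hb hwa hwb
    have hlt := (pow_succ_lt_prodR_of_mem_XLevel hD ha hwa).trans_le
      ((mem_XLevel_iff hb).mp hwb).2.1
    have := (pow_lt_pow_iff_right_of_lt_one₀ hD.R_pos hD.R_lt_one).mp hlt
    omega
  exact le_antisymm (key hm' hm h' h) (key hm hm' h h')

lemma IsWord.of_prefix {u w : List ℕ} (hw : IsWord n w) (h : u <+: w) : IsWord n u := by
  intro j hj
  simpa only [List.get_eq_getElem, h.getElem hj] using hw j (hj.trans_le h.length_le)

lemma IsWord.of_append_singleton {w : List ℕ} {a : ℕ} (h : IsWord n (w ++ [a])) :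
    IsWord n w ∧ 1 ≤ a ∧ a ≤ n w.length := by
  have ha := h w.length (by simp)
  simp only [List.get_eq_getElem, List.getElem_concat_length] at ha
  exact ⟨h.of_prefix (List.prefix_append w [a]), ha⟩

lemma eq_of_prefix_of_mem_XLevel (hD : MoranData d J n r R) {s : ℕ} (hs : s ≠ 0)
    {a b : List ℕ} (hab : a <+: b) (ha : a ∈ XLevel n r R s) (hb : b ∈ XLevel n r R s) :
    a = b := by
  refine hab.eq_of_length (le_antisymm hab.length_le (not_lt.mp fun hlt => ?_))
  have := prodR_antitone hD.r_pos (fun k => (hD.r_lt_one k).le) (Nat.le_sub_one_of_lt hlt)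
  linarith [((mem_XLevel_iff hs).mp ha).2.1, ((mem_XLevel_iff hs).mp hb).2.2]

lemma eq_of_prefix_of_prefix_of_mem_XLevel (hD : MoranData d J n r R) {s : ℕ} {w a b : List ℕ}
    (ha : a <+: w) (hb : b <+: w) (has : a ∈ XLevel n r R s) (hbs : b ∈ XLevel n r R s) :
    a = b := by
  rcases eq_or_ne s 0 with rfl | hs
  · rw [mem_XLevel_zero] at has hbs
    rw [has, hbs]
  · rcases List.prefix_or_prefix_of_prefix ha hb with h | h
    · exact eq_of_prefix_of_mem_XLevel hD hs h has hbs
    · exact (eq_of_prefix_of_mem_XLevel hD hs h hbs has).symm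

lemma exists_prefix_mem_XLevel (hD : MoranData d J n r R) {m s : ℕ} (hsm : s ≤ m) {w : List ℕ}
    (hw : w ∈ XLevel n r R m) : ∃ a, a <+: w ∧ a ∈ XLevel n r R s := by
  rcases eq_or_ne s 0 with rfl | hs
  · exact ⟨[], List.nil_prefix, mem_XLevel_zero.mpr rfl⟩
  obtain ⟨hword, hwm, -⟩ := (mem_XLevel_iff (by omega)).mp hw
  have hws : prodR r w.length ≤ R ^ s :=
    hwm.trans (pow_le_pow_of_le_one hD.R_pos.le hD.R_lt_one.le hsm)
  have hex : ∃ k, prodR r k ≤ R ^ s := ⟨w.length, hws⟩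
  -- the prefix of the least length `k` with `r_1 ⋯ r_k ≤ R^s`
  set k := Nat.find hex
  have hk0 : k ≠ 0 := fun h0 => by
    have h := Nat.find_spec hex
    rw [show Nat.find hex = 0 from h0, prodR_zero] at h
    exact (pow_lt_one₀ hD.R_pos.le hD.R_lt_one hs).not_ge h
  have hkw : k ≤ w.length := Nat.find_min' hex hws
  refine ⟨w.take k, List.take_prefix k w, (mem_XLevel_iff hs).mpr ?_⟩
  rw [List.length_take_of_le hkw]
  exact ⟨hword.of_prefix (List.take_prefix k w), Nat.find_spec hex,
    lt_of_not_ge (Nat.find_min hex (by omega))⟩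

lemma exists_isParent (hD : MoranData d J n r R) {t : ℕ} {a : List ℕ}
    (ha : a ∈ XLevel n r R (t + 1)) : ∃ b ∈ XLevel n r R t, IsParent n r R b a := by
  obtain ⟨b, hba, hbt⟩ := exists_prefix_mem_XLevel hD (Nat.le_succ t) ha
  refine ⟨b, hbt, ?_, hba, t + 1, by omega, ha, by simpa using hbt⟩
  rintro rfl
  rcases eq_or_ne t 0 with rfl | ht
  · have := length_pos_of_mem_XLevel hD one_ne_zero ha
    simp_all
  · have := level_eq_of_mem_XLevel hD ht (by omega) hbt ha
    omega

def IsHorizontal (M : MoranStructure d J n r) (R : ℝ) {x y : List ℕ}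
    (p : (AugGraph M R).Walk x y) : Prop :=
  ∀ e ∈ p.darts, Ehor M R e.toProd.1 e.toProd.2

noncomputable def ancestorsAt (n : ℕ → ℕ) (r : ℕ → ℝ) (R : ℝ) (s : ℕ) (S : List (List ℕ)) :
    Finset (List ℕ) :=
  (S.flatMap List.inits).toFinset.filter (· ∈ XLevel n r R s)

lemma mem_ancestorsAt {s : ℕ} {S : List (List ℕ)} {a : List ℕ} :
    a ∈ ancestorsAt n r R s S ↔ (∃ u ∈ S, a <+: u) ∧ a ∈ XLevel n r R s := by
  simp [ancestorsAt, List.mem_flatMap, List.mem_inits]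

lemma card_ancestorsAt_zero_le_one (S : List (List ℕ)) : (ancestorsAt n r R 0 S).card ≤ 1 :=
  Finset.card_le_one.mpr fun a ha b hb => by
    rw [mem_XLevel_zero.mp (mem_ancestorsAt.mp ha).2, mem_XLevel_zero.mp (mem_ancestorsAt.mp hb).2]

variable (M : MoranStructure d J n r)

lemma MoranStructure.Jset_subset_of_prefix {u w : List ℕ} (hw : IsWord n w) (h : u <+: w) :
    M.Jset w ⊆ M.Jset u := by
  obtain ⟨t, rfl⟩ := h
  induction t using List.reverseRecOn with
  | nil => simp
  | append_singleton t a ih =>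
    rw [← List.append_assoc] at hw ⊢
    obtain ⟨hut, ha1, ha2⟩ := hw.of_append_singleton
    exact (M.nested _ hut a ha1 ha2).trans (ih hut)

lemma MoranStructure.diam_Jset {w : List ℕ} (hw : IsWord n w) :
    diam (M.Jset w) = prodR r w.length * diam J := by
  induction w using List.reverseRecOn with
  | nil => simp [M.root_eq]
  | append_singleton w a ih =>
    obtain ⟨hw', ha1, ha2⟩ := hw.of_append_singleton
    rw [M.diam_ratio w hw' a ha1 ha2, ih hw', List.length_append, List.length_singleton,
      prodR_succ]
    ring

lemma MoranStructure.isCompact_Jset (hJ : IsCompact J) {w : List ℕ} (hw : IsWord n w) :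
    IsCompact (M.Jset w) := by
  obtain ⟨S, c, hc, hS, hJw⟩ := M.similar w hw
  have hlip : LipschitzWith c.toNNReal S :=
    LipschitzWith.of_dist_le_mul fun x y => by rw [hS, Real.coe_toNNReal _ hc.le]
  rw [hJw]
  exact hJ.image hlip.continuous

lemma MoranStructure.Jset_nonempty (hJ : J.Nonempty) {w : List ℕ} (hw : IsWord n w) :
    (M.Jset w).Nonempty := by
  obtain ⟨S, c, -, -, hJw⟩ := M.similar w hw
  rw [hJw]
  exact hJ.image S

lemma MoranStructure.exists_ball_subset_Jset (hJ : 0 < diam J) {z : Pt d} {ρ : ℝ}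
    (hball : ball z ρ ⊆ J) {w : List ℕ} (hw : IsWord n w) :
    ∃ c, ball c (ρ * prodR r w.length) ⊆ M.Jset w := by
  obtain ⟨S, c, hc, hS, hJw⟩ := M.similar w hw
  have hc' : c = prodR r w.length := by
    have h := M.diam_Jset hw
    rw [hJw, diam_image_of_dist_eq hc hS] at h
    exact mul_right_cancel₀ hJ.ne' h
  refine ⟨S z, ?_⟩
  rw [← hc', mul_comm, hJw]
  exact (ball_subset_image_ball hc hS z ρ).trans (image_mono hball)

lemma MoranStructure.disjoint_interior_Jset (hD : MoranData d J n r R) {s : ℕ} (hs : s ≠ 0)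
    {a b : List ℕ} (hne : a ≠ b) (ha : a ∈ XLevel n r R s) (hb : b ∈ XLevel n r R s) :
    Disjoint (interior (M.Jset a)) (interior (M.Jset b)) := by
  have hwa := ((mem_XLevel_iff hs).mp ha).1
  have hwb := ((mem_XLevel_iff hs).mp hb).1
  obtain ⟨u, α, β, ta, tb, rfl, rfl, hαβ⟩ := List.exists_append_cons_of_not_prefix
    (fun h => hne (eq_of_prefix_of_mem_XLevel hD hs h ha hb))
    (fun h => hne (eq_of_prefix_of_mem_XLevel hD hs h hb ha).symm)
  have hpa : u ++ [α] <+: u ++ α :: ta := ⟨ta, by simp⟩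
  have hpb : u ++ [β] <+: u ++ β :: tb := ⟨tb, by simp⟩
  obtain ⟨hu, hα1, hα2⟩ := (hwa.of_prefix hpa).of_append_singleton
  obtain ⟨-, hβ1, hβ2⟩ := (hwb.of_prefix hpb).of_append_singleton
  exact (Set.disjoint_iff_inter_eq_empty.mpr (M.disjoint_int u hu α β hα1 hα2 hβ1 hβ2 hαβ)).mono
    (interior_mono (M.Jset_subset_of_prefix hwa hpa))
    (interior_mono (M.Jset_subset_of_prefix hwb hpb))

lemma exists_walk_to_prefix (hD : MoranData d J n r R) (l : ℕ) :
    ∀ {m : ℕ} {w : List ℕ}, w ∈ XLevel n r R (m + l) →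
      ∃ a, a <+: w ∧ a ∈ XLevel n r R m ∧ ∃ q : (AugGraph M R).Walk w a, q.length = l := by
  induction l with
  | zero => exact fun hw => ⟨_, List.prefix_refl _, hw, .nil, rfl⟩
  | succ l ih =>
    intro m w hw
    obtain ⟨a, haw, ha, q, hq⟩ := ih (m := m + 1) (by rwa [add_right_comm])
    obtain ⟨b, hb, hba⟩ := exists_isParent hD ha
    have hadj : (AugGraph M R).Adj a b := Or.inl (Or.inr hba)
    exact ⟨b, hba.2.1.trans haw, hb, q.concat hadj, by rw [SimpleGraph.Walk.length_concat, hq]⟩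

lemma exists_level_of_isHorizontal (hD : MoranData d J n r R) {x y : List ℕ}
    (p : (AugGraph M R).Walk x y) (hp : IsHorizontal M R p) (h0 : p.length ≠ 0) :
    ∃ m ≠ 0, ∀ v ∈ p.support, v ∈ XLevel n r R m := by
  induction p with
  | nil => exact absurd rfl h0
  | @cons u w y h q ih =>
    obtain ⟨-, m, hm, hu, hw, -⟩ := hp ⟨(u, w), h⟩ (by simp)
    have hq : ∀ v ∈ q.support, v ∈ XLevel n r R m := by
      rcases eq_or_ne q.length 0 with hq0 | hq0
      · rw [SimpleGraph.Walk.nil_iff_support_eq.mp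
          (SimpleGraph.Walk.length_eq_zero_iff.mp hq0)]
        simpa using hw
      · obtain ⟨m', hm', hq'⟩ := ih (fun e he => hp e (by simp [he])) hq0
        rwa [level_eq_of_mem_XLevel hD (by omega) hm' hw (hq' w q.start_mem_support)]
    exact ⟨m, by omega, by simpa [hu] using hq⟩

lemma exists_walk_in_ancestorsAt (hD : MoranData d J n r R) {m s : ℕ} (hsm : s ≤ m) {x y : List ℕ}
    (p : (AugGraph M R).Walk x y) (hsupp : ∀ v ∈ p.support, v ∈ XLevel n r R m)
    (hds : ∀ e ∈ p.darts, (M.Jset e.toProd.1 ∩ M.Jset e.toProd.2).Nonempty)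
    {ax ay : List ℕ} (hax : ax <+: x) (haxs : ax ∈ XLevel n r R s) (hay : ay <+: y)
    (hays : ay ∈ XLevel n r R s) :
    ∃ W : (AugGraph M R).Walk ax ay, ∀ v ∈ W.support, v ∈ ancestorsAt n r R s p.support := by
  induction p generalizing ax with
  | nil =>
    obtain rfl := eq_of_prefix_of_prefix_of_mem_XLevel hD hax hay haxs hays
    refine ⟨.nil, fun v hv => ?_⟩
    rw [SimpleGraph.Walk.mem_support_nil_iff.mp hv]
    exact mem_ancestorsAt.mpr ⟨⟨_, by simp, hax⟩, haxs⟩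
  | @cons u w y h q ih =>
    have hmono : ∀ v ∈ ancestorsAt n r R s q.support,
        v ∈ ancestorsAt n r R s (SimpleGraph.Walk.cons h q).support := fun v hv => by
      obtain ⟨⟨t, ht, hvt⟩, hvs⟩ := mem_ancestorsAt.mp hv
      exact mem_ancestorsAt.mpr ⟨⟨t, by simp [ht], hvt⟩, hvs⟩
    have hw := hsupp w (by simp)
    obtain ⟨aw, haw, haws⟩ := exists_prefix_mem_XLevel hD hsm hw
    obtain ⟨W, hW⟩ := ih (fun v hv => hsupp v (by simp [hv]))
      (fun e he => hds e (by simp [he])) haw haws hay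
    rcases eq_or_ne ax aw with rfl | hne
    · exact ⟨W, fun v hv => hmono v (hW v hv)⟩
    have hs : s ≠ 0 := by
      rintro rfl
      exact hne ((mem_XLevel_zero.mp haxs).trans (mem_XLevel_zero.mp haws).symm)
    have hm : m ≠ 0 := by omega
    obtain ⟨pt, hptu, hptw⟩ := hds ⟨(u, w), h⟩ (by simp)
    have hJ : (M.Jset ax ∩ M.Jset aw).Nonempty :=
      ⟨pt, M.Jset_subset_of_prefix ((mem_XLevel_iff hm).mp (hsupp u (by simp))).1 hax hptu,
        M.Jset_subset_of_prefix ((mem_XLevel_iff hm).mp hw).1 haw hptw⟩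
    refine ⟨.cons (Or.inr ⟨hne, s, by omega, haxs, haws, hJ⟩) W, fun v hv => ?_⟩
    rcases List.mem_cons.mp hv with rfl | hv
    · exact mem_ancestorsAt.mpr ⟨⟨u, by simp, hax⟩, haxs⟩
    · exact hmono v (hW v hv)

lemma dist_add_one_le_card_ancestorsAt (hD : MoranData d J n r R) {m s : ℕ} (hsm : s ≤ m)
    {x y : List ℕ} (p : (AugGraph M R).Walk x y) (hsupp : ∀ v ∈ p.support, v ∈ XLevel n r R m)
    (hds : ∀ e ∈ p.darts, (M.Jset e.toProd.1 ∩ M.Jset e.toProd.2).Nonempty) :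
    (AugGraph M R).dist x y + 1 ≤ 2 * (m - s) + (ancestorsAt n r R s p.support).card := by
  have hm : m = s + (m - s) := by omega
  obtain ⟨ax, hax, haxs, qx, hqx⟩ :=
    exists_walk_to_prefix M hD (m - s) (hm ▸ hsupp x p.start_mem_support)
  obtain ⟨ay, hay, hays, qy, hqy⟩ :=
    exists_walk_to_prefix M hD (m - s) (hm ▸ hsupp y p.end_mem_support)
  obtain ⟨W, hW⟩ := exists_walk_in_ancestorsAt M hD hsm p hsupp hds hax haxs hay hays
  have hWlen : W.bypass.length + 1 ≤ (ancestorsAt n r R s p.support).card := by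
    rw [← W.bypass.length_support, ← List.toFinset_card_of_nodup W.bypass_isPath.support_nodup]
    exact Finset.card_le_card fun v hv =>
      hW v (W.support_bypass_subset_support (List.mem_toFinset.mp hv))
  have hdist := (AugGraph M R).dist_le (qx.append (W.bypass.append qy.reverse))
  simp only [SimpleGraph.Walk.length_append, SimpleGraph.Walk.length_reverse, hqx, hqy] at hdist
  omega

lemma MoranStructure.card_le_of_forall_exists_dist_le (hD : MoranData d J n r R) {z : Pt d}
    {ρ : ℝ} (hρ : 0 < ρ) (hball : ball z ρ ⊆ J) {s : ℕ} (hs : s ≠ 0) (F : Finset (List ℕ))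
    (hF : ∀ a ∈ F, a ∈ XLevel n r R s) (q : Pt d)
    (hnear : ∀ a ∈ F, ∃ pt ∈ M.Jset a, dist pt q ≤ R ^ (s + 1) * diam J) :
    (F.card : ℝ) ≤ (1 + diam J / (ρ * R) + diam J / ρ) ^ d := by
  have hR := hD.R_pos
  have hJ := hD.diam_pos
  set ε := ρ * R ^ (s + 1)
  have hε : 0 < ε := by positivity
  have hword : ∀ a ∈ F, IsWord n a := fun a ha => ((mem_XLevel_iff hs).mp (hF a ha)).1
  choose! c hc using fun a ha => M.exists_ball_subset_Jset hJ hball (hword a ha)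
  have hcε : ∀ a ∈ F, ball (c a) ε ⊆ M.Jset a := fun a ha =>
    (ball_subset_ball (mul_le_mul_of_nonneg_left
      (pow_succ_lt_prodR_of_mem_XLevel hD hs (hF a ha)).le hρ.le)).trans (hc a ha)
  have hdisj : (F : Set (List ℕ)).PairwiseDisjoint fun a => ball (c a) ε :=
    fun a ha b hb hab => (M.disjoint_interior_Jset hD hs hab (hF a ha) (hF b hb)).mono
      (isOpen_ball.subset_interior_iff.mpr (hcε a ha))
      (isOpen_ball.subset_interior_iff.mpr (hcε b hb))
  set Q := 1 + diam J / (ρ * R) + diam J / ρ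
  have hQε : Q * ε = ε + R ^ s * diam J + R ^ (s + 1) * diam J := by
    simp only [Q, ε]
    field_simp
    ring
  have hsub : ∀ a ∈ F, ball (c a) ε ⊆ ball q (Q * ε) := by
    intro a ha y hy
    obtain ⟨pt, hpt, hptq⟩ := hnear a ha
    have hca : dist (c a) pt ≤ R ^ s * diam J := by
      have h := dist_le_diam_of_mem (M.isCompact_Jset hD.compact (hword a ha)).isBounded
        (hcε a ha (mem_ball_self hε)) hpt
      rw [M.diam_Jset (hword a ha)] at h
      exact h.trans (mul_le_mul_of_nonneg_right ((mem_XLevel_iff hs).mp (hF a ha)).2.1 hJ.le)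
    rw [mem_ball, hQε]
    linarith [dist_triangle4 y (c a) pt q, mem_ball.mp hy]
  have hpack := card_mul_pow_le_of_pairwiseDisjoint_ball F c q hε (by positivity) hdisj hsub
  rw [finrank_euclideanSpace_fin, mul_pow Q ε d] at hpack
  exact le_of_mul_le_mul_right hpack (by positivity)

lemma card_ancestorsAt_le (hD : MoranData d J n r R) {z : Pt d} {ρ : ℝ} (hρ : 0 < ρ)
    (hball : ball z ρ ⊆ J) {m s : ℕ} (hm : m ≠ 0) (hs : s ≠ 0) {x y : List ℕ}
    (p : (AugGraph M R).Walk x y) (hsupp : ∀ v ∈ p.support, v ∈ XLevel n r R m)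
    (hds : ∀ e ∈ p.darts, (M.Jset e.toProd.1 ∩ M.Jset e.toProd.2).Nonempty)
    (hlen : (p.length + 1) * R ^ m ≤ R ^ (s + 1)) :
    ((ancestorsAt n r R s p.support).card : ℝ) ≤ (1 + diam J / (ρ * R) + diam J / ρ) ^ d := by
  have hword : ∀ v ∈ p.support, IsWord n v := fun v hv =>
    ((mem_XLevel_iff hm).mp (hsupp v hv)).1
  have hJne : J.Nonempty := hD.int_nonempty.mono interior_subset
  obtain ⟨q, hq⟩ := M.Jset_nonempty hJne (hword x p.start_mem_support)
  have hchain := dist_le_of_chain M.Jset p (D := R ^ m * diam J) (fun v hv =>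
      ⟨(M.isCompact_Jset hD.compact (hword v hv)).isBounded, by
        rw [M.diam_Jset (hword v hv)]
        exact mul_le_mul_of_nonneg_right ((mem_XLevel_iff hm).mp (hsupp v hv)).2.1
          diam_nonneg⟩) hds q hq
  refine M.card_le_of_forall_exists_dist_le hD hρ hball hs _
    (fun a ha => (mem_ancestorsAt.mp ha).2) q fun a ha => ?_
  obtain ⟨⟨u, hu, hau⟩, -⟩ := mem_ancestorsAt.mp ha
  obtain ⟨pt, hpt⟩ := M.Jset_nonempty hJne (hword u hu)
  refine ⟨pt, M.Jset_subset_of_prefix (hword u hu) hau hpt, ?_⟩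
  calc dist pt q ≤ (p.length + 1) * (R ^ m * diam J) := hchain u hu pt hpt
    _ = (p.length + 1) * R ^ m * diam J := by ring
    _ ≤ R ^ (s + 1) * diam J := by gcongr

lemma exists_length_le_of_isHorizontal (hD : MoranData d J n r R) :
    ∃ Q : ℝ, ∀ (x y : List ℕ) (p : (AugGraph M R).Walk x y), IsHorizontal M R p →
      p.length = (AugGraph M R).dist x y → ∀ k : ℕ, (p.length + 1 : ℝ) * R ^ k ≤ 1 →
      (p.length : ℝ) ≤ 2 * k + Q := by
  obtain ⟨z, hz⟩ := hD.int_nonempty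
  obtain ⟨ρ, hρ, hball⟩ := Metric.mem_nhds_iff.mp (mem_interior_iff_mem_nhds.mp hz)
  set Q := (1 + diam J / (ρ * R) + diam J / ρ) ^ d
  have hQ : 1 ≤ Q := by
    have := hD.R_pos
    have := hD.diam_pos
    exact one_le_pow₀ (by linarith [(by positivity : 0 ≤ diam J / (ρ * R) + diam J / ρ)])
  refine ⟨1 + Q, fun x y p hp hgeo k hk => ?_⟩
  rcases eq_or_ne p.length 0 with h0 | h0
  · rw [h0, Nat.cast_zero]
    linarith [(Nat.cast_nonneg k : (0 : ℝ) ≤ k)]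
  obtain ⟨m, hm, hsupp⟩ := exists_level_of_isHorizontal M hD p hp h0
  have hds : ∀ e ∈ p.darts, (M.Jset e.toProd.1 ∩ M.Jset e.toProd.2).Nonempty :=
    fun e he => by obtain ⟨-, -, -, -, -, h⟩ := hp e he; exact h
  -- go up `k + 1` levels, or to the root if `m ≤ k + 1`
  set s := m - min (k + 1) m
  have hcard : ((ancestorsAt n r R s p.support).card : ℝ) ≤ Q := by
    rcases eq_or_ne s 0 with hs | hs
    · rw [hs]
      exact (Nat.cast_le_one.mpr (card_ancestorsAt_zero_le_one _)).trans hQ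
    · have hsk : s + 1 + k = m := by omega
      have hR := hD.R_pos
      refine card_ancestorsAt_le M hD hρ hball hm hs p hsupp hds ?_
      calc (p.length + 1) * R ^ m = (p.length + 1) * R ^ k * R ^ (s + 1) := by
            rw [← hsk, pow_add]; ring
        _ ≤ 1 * R ^ (s + 1) := by gcongr
        _ = R ^ (s + 1) := one_mul _
  have hdist := dist_add_one_le_card_ancestorsAt M hD (Nat.sub_le m (min (k + 1) m)) p hsupp hds
  rw [← hgeo] at hdist
  have hms : m - s ≤ k + 1 := by omega
  have hdist' : (p.length : ℝ) + 1 ≤ 2 * (k + 1) + Q := by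
    calc (p.length : ℝ) + 1 ≤ 2 * (m - s : ℕ) + (ancestorsAt n r R s p.support).card := by
          exact_mod_cast hdist
      _ ≤ 2 * (k + 1) + Q := by gcongr; exact_mod_cast hms
  linarith

end MoranPaper

/-- the lengths of horizontal geodesics in the induced augmented tree
are uniformly bounded. -/
theorem MoranPaper.statement2 (d : ℕ) (J : Set (MoranPaper.Pt d)) (n : ℕ → ℕ) (r : ℕ → ℝ)
    (R : ℝ) (hD : MoranPaper.MoranData d J n r R) (M : MoranPaper.MoranStructure d J n r) :
    ∃ k : ℕ, ∀ (x y : List ℕ) (p : (MoranPaper.AugGraph M R).Walk x y),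
      (∀ e ∈ p.darts, MoranPaper.Ehor M R e.toProd.1 e.toProd.2) →
      p.length = (MoranPaper.AugGraph M R).dist x y →
      p.length ≤ k := by
  obtain ⟨Q, hQ⟩ := MoranPaper.exists_length_le_of_isHorizontal M hD
  have hlog : 0 < Real.log R⁻¹ := Real.log_pos ((one_lt_inv₀ hD.R_pos).mpr hD.R_lt_one)
  obtain ⟨K, hK⟩ := MoranPaper.exists_nat_bound_of_le_mul_log_add (div_pos two_pos hlog) (2 + Q)
  refine ⟨K, fun x y p hp hgeo => hK _ ?_⟩
  obtain ⟨k, hk, hk'⟩ := MoranPaper.exists_mul_pow_le_one hD.R_pos hD.R_lt_one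
    (le_add_of_nonneg_left (Nat.cast_nonneg p.length) : (1 : ℝ) ≤ p.length + 1)
  calc (p.length : ℝ) ≤ 2 * k + Q := hQ x y p hp hgeo k hk
    _ ≤ 2 * (Real.log (p.length + 1) / Real.log R⁻¹ + 1) + Q := by gcongr
    _ = 2 / Real.log R⁻¹ * Real.log (p.length + 1) + (2 + Q) := by ring
end

section
/- An augmented tree (X, 𝔈) is hyperbolic (there exists δ ≥ 0 with ⟨x,y⟩ ≥ min(⟨x,z⟩, ⟨z,y⟩) − δ for all x, y, z ∈ X) if and only if there exists k ∈ ℕ such that every horizontal geodesic has length at most k. -/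
open Metric Set Filter

attribute [local instance] Classical.propDecidable

/-!
Every walk from `x` to `y` is at least as long as a canonical one, which climbs from `x` to
some level `t`, runs horizontally between the ancestors of `x` and `y` at level `t`, and
descends to `y`. For a geodesic the horizontal part is then a horizontal geodesic, so if those
have length at most `k`, then `t - k / 2 ≤ ⟨x, y⟩ ≤ t`. Projecting the horizontal parts for
`(x, z)` and `(z, y)` up to the lower of their two levels joins the ancestors of `x` and `y`
there by a horizontal walk of length at most `2k`, which gives hyperbolicity with `δ = k`.
Conversely, comparing the endpoints of a horizontal geodesic of length `L` with its midpoint,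
all three on one level, hyperbolicity forces `L ≤ 4δ + 1`.
-/

namespace MoranPaper.AugmentedTree

variable {V : Type*} {T : AugmentedTree V}

variable (T) in
def hor : SimpleGraph V where
  Adj := T.Eh
  symm := ⟨T.Eh_symm⟩
  loopless := ⟨fun x h => T.Eh_ne x x h rfl⟩

variable (T) in
lemma hor_le_graph : T.hor ≤ T.graph :=
  fun x y h => ⟨T.Eh_ne x y h, Or.inr h⟩

variable (T) in
def IsHorizontal {x y : V} (p : T.graph.Walk x y) : Prop :=
  ∀ e ∈ p.darts, T.Eh e.fst e.snd

variable (T) in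
lemma isHorizontal_mapLe {x y : V} (w : T.hor.Walk x y) :
    T.IsHorizontal (w.mapLe T.hor_le_graph) := by
  simp only [IsHorizontal, SimpleGraph.Walk.darts_map, List.mem_map]
  rintro _ ⟨e, he, rfl⟩
  exact e.adj

lemma IsHorizontal.lvl_eq {x y : V} {p : T.graph.Walk x y} (hp : T.IsHorizontal p) :
    T.lvl x = T.lvl y := by
  induction p with
  | nil => rfl
  | cons h q ih =>
    simp only [IsHorizontal, SimpleGraph.Walk.darts_cons, List.forall_mem_cons] at hp
    exact (T.Eh_lvl _ _ hp.1).trans (ih hp.2)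

variable (T) in
/-- The ancestor of `x` at level `t`; it is `x` itself when `lvl x ≤ t`. -/
def anc (t : ℕ) (x : V) : V := T.parent^[T.lvl x - t] x

lemma eq_root_of_lvl_eq_zero {x : V} (h : T.lvl x = 0) : x = T.root := by
  by_contra hx
  have := T.lvl_parent x hx
  omega

lemma ne_root_of_lvl_pos {x : V} (h : 0 < T.lvl x) : x ≠ T.root :=
  fun hx => by rw [hx, T.lvl_root] at h; omega

lemma lvl_iterate_parent {j : ℕ} {x : V} (h : j ≤ T.lvl x) :
    T.lvl (T.parent^[j] x) = T.lvl x - j := by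
  induction j generalizing x with
  | zero => rfl
  | succ j ih =>
    have hx := ne_root_of_lvl_pos (show 0 < T.lvl x by omega)
    have := T.lvl_parent x hx
    rw [Function.iterate_succ_apply, ih (by omega)]
    omega

lemma lvl_anc {t : ℕ} {x : V} (h : t ≤ T.lvl x) : T.lvl (T.anc t x) = t := by
  rw [anc, lvl_iterate_parent (Nat.sub_le _ _)]
  omega

lemma anc_lvl (x : V) : T.anc (T.lvl x) x = x := by
  simp [anc]

lemma anc_zero (x : V) : T.anc 0 x = T.root :=
  eq_root_of_lvl_eq_zero (lvl_anc (Nat.zero_le _))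

lemma anc_anc {t s : ℕ} {x : V} (hts : t ≤ s) (hs : s ≤ T.lvl x) :
    T.anc t (T.anc s x) = T.anc t x := by
  rw [anc, lvl_anc hs, anc, ← Function.iterate_add_apply]
  congr 1
  omega

lemma anc_parent {t : ℕ} {x : V} (hx : x ≠ T.root) (ht : t < T.lvl x) :
    T.anc t (T.parent x) = T.anc t x := by
  have := T.lvl_parent x hx
  rw [anc, anc, ← Function.iterate_succ_apply]
  congr 1
  omega

lemma adj_parent {x : V} (hx : x ≠ T.root) : T.graph.Adj x (T.parent x) := by
  have := T.lvl_parent x hx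
  exact ⟨fun h => by rw [← h] at this; omega, Or.inl (Or.inl ⟨hx, rfl⟩)⟩

lemma exists_walk_iterate_parent {j : ℕ} {x : V} (h : j ≤ T.lvl x) :
    ∃ p : T.graph.Walk x (T.parent^[j] x), p.length = j := by
  induction j generalizing x with
  | zero => exact ⟨.nil, rfl⟩
  | succ j ih =>
    have hx := ne_root_of_lvl_pos (show 0 < T.lvl x by omega)
    have := T.lvl_parent x hx
    obtain ⟨p, hp⟩ := ih (x := T.parent x) (by omega)
    exact ⟨.cons (adj_parent hx) p, by simp [hp]⟩

lemma exists_walk_anc (t : ℕ) (x : V) :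
    ∃ p : T.graph.Walk x (T.anc t x), p.length = T.lvl x - t :=
  exists_walk_iterate_parent (Nat.sub_le _ _)

variable (T) in
lemma graph_connected : T.graph.Connected := by
  have : Nonempty V := ⟨T.root⟩
  have reach_root (x : V) : T.graph.Reachable x T.root := by
    obtain ⟨p, -⟩ := exists_walk_anc (T := T) 0 x
    exact ⟨anc_zero (T := T) x ▸ p⟩
  exact ⟨fun x y => (reach_root x).trans (reach_root y).symm⟩

lemma dist_le_of_walk_anc {t : ℕ} {x y : V} (q : T.graph.Walk (T.anc t x) (T.anc t y)) :
    T.graph.dist x y ≤ T.lvl x - t + q.length + (T.lvl y - t) := by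
  obtain ⟨px, hpx⟩ := exists_walk_anc t x
  obtain ⟨py, hpy⟩ := exists_walk_anc t y
  simpa [hpx, hpy, add_assoc] using SimpleGraph.dist_le (px.append (q.append py.reverse))

lemma exists_hor_walk_parent {a b : V} (w : T.hor.Walk a b) :
    ∃ w' : T.hor.Walk (T.parent a) (T.parent b), w'.length ≤ w.length := by
  induction w with
  | nil => exact ⟨.nil, le_rfl⟩
  | cons h w ih =>
    obtain ⟨w', hw'⟩ := ih
    rcases T.Eh_parent _ _ h with he | he
    · exact ⟨w'.copy he.symm rfl, by
        rw [SimpleGraph.Walk.length_copy, SimpleGraph.Walk.length_cons]; omega⟩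
    · exact ⟨.cons (show T.hor.Adj _ _ from he) w', by
        rw [SimpleGraph.Walk.length_cons, SimpleGraph.Walk.length_cons]; omega⟩

lemma exists_hor_walk_iterate_parent (j : ℕ) {a b : V} (w : T.hor.Walk a b) :
    ∃ w' : T.hor.Walk (T.parent^[j] a) (T.parent^[j] b), w'.length ≤ w.length := by
  induction j with
  | zero => exact ⟨w, le_rfl⟩
  | succ j ih =>
    obtain ⟨w', hw'⟩ := ih
    obtain ⟨w'', hw''⟩ := exists_hor_walk_parent w'
    rw [Function.iterate_succ_apply', Function.iterate_succ_apply']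
    exact ⟨w'', hw''.trans hw'⟩

lemma exists_hor_walk_anc_of_le {t s : ℕ} {x y : V} (hts : t ≤ s) (hx : s ≤ T.lvl x)
    (hy : s ≤ T.lvl y) (w : T.hor.Walk (T.anc s x) (T.anc s y)) :
    ∃ w' : T.hor.Walk (T.anc t x) (T.anc t y), w'.length ≤ w.length := by
  have key {z : V} (hz : s ≤ T.lvl z) : T.anc t z = T.parent^[s - t] (T.anc s z) := by
    rw [← anc_anc hts hz, anc, lvl_anc hz]
  rw [key hx, key hy]
  exact exists_hor_walk_iterate_parent _ w

lemma exists_hor_walk_of_walk {x y : V} (p : T.graph.Walk x y) :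
    ∃ t ≤ T.lvl x, t ≤ T.lvl y ∧ ∃ w : T.hor.Walk (T.anc t x) (T.anc t y),
      T.lvl x - t + w.length + (T.lvl y - t) ≤ p.length := by
  induction p with
  | nil => exact ⟨_, le_rfl, le_rfl, .nil, by simp⟩
  | @cons x v y h q ih =>
    obtain ⟨t, htv, hty, w, hw⟩ := ih
    rw [SimpleGraph.Walk.length_cons]
    obtain ⟨-, (⟨hx, rfl⟩ | ⟨hv, rfl⟩) | he⟩ := h
    · have := T.lvl_parent x hx
      refine ⟨t, by omega, hty, w.copy (anc_parent hx (by omega)) rfl, ?_⟩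
      rw [SimpleGraph.Walk.length_copy]
      omega
    · -- when `t = lvl v`, the horizontal part has to be lifted to the level of `x = parent v`
      have := T.lvl_parent v hv
      set t' := min t (T.lvl (T.parent v))
      obtain ⟨w', hw'⟩ := exists_hor_walk_anc_of_le (min_le_left _ _ : t' ≤ t) htv hty w
      have hanc : T.anc t' v = T.anc t' (T.parent v) := (anc_parent hv (by omega)).symm
      refine ⟨t', min_le_right _ _, by omega, w'.copy hanc rfl, ?_⟩
      rw [SimpleGraph.Walk.length_copy]
      omega
    · have hlvl := T.Eh_lvl _ _ he
      obtain ⟨e, hle⟩ := exists_hor_walk_anc_of_le (t := t) (by omega) le_rfl hlvl.le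
        ((show T.hor.Adj x v from he).toWalk.copy (anc_lvl x).symm (by rw [hlvl, anc_lvl]))
      refine ⟨t, by omega, hty, e.append w, ?_⟩
      simp only [SimpleGraph.Walk.length_append, SimpleGraph.Walk.length_copy,
        SimpleGraph.Adj.length_toWalk] at hle ⊢
      omega

lemma gromov_le_of_le_dist {t : ℕ} {x y : V} (hx : t ≤ T.lvl x) (hy : t ≤ T.lvl y)
    (h : T.lvl x - t + (T.lvl y - t) ≤ T.graph.dist x y) : T.gromov x y ≤ t := by
  have : (T.lvl x : ℝ) + T.lvl y ≤ T.graph.dist x y + 2 * t := by exact_mod_cast (by omega)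
  rw [gromov]
  linarith

lemma sub_le_gromov_of_hor_walk {t : ℕ} {x y : V} (hx : t ≤ T.lvl x) (hy : t ≤ T.lvl y)
    (w : T.hor.Walk (T.anc t x) (T.anc t y)) : (t : ℝ) - w.length / 2 ≤ T.gromov x y := by
  have h := dist_le_of_walk_anc (w.mapLe T.hor_le_graph)
  rw [SimpleGraph.Walk.length_mapLe] at h
  have : (T.graph.dist x y : ℝ) + 2 * t ≤ T.lvl x + w.length + T.lvl y := by
    exact_mod_cast (by omega)
  rw [gromov]
  linarith

variable (T) in
def HorizontalGeodesicsBoundedBy (k : ℕ) : Prop :=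
  ∀ (x y : V) (p : T.graph.Walk x y), T.IsHorizontal p → p.length = T.graph.dist x y →
    p.length ≤ k

lemma exists_short_hor_walk {k : ℕ} (hk : T.HorizontalGeodesicsBoundedBy k) (x y : V) :
    ∃ t ≤ T.lvl x, t ≤ T.lvl y ∧ T.gromov x y ≤ t ∧
      ∃ w : T.hor.Walk (T.anc t x) (T.anc t y), w.length ≤ k := by
  obtain ⟨p, hp⟩ := T.graph_connected.exists_walk_length_eq_dist x y
  obtain ⟨t, hx, hy, w, hw⟩ := exists_hor_walk_of_walk p
  obtain ⟨q, hq⟩ := T.graph_connected.exists_walk_length_eq_dist (T.anc t x) (T.anc t y)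
  have hpq := dist_le_of_walk_anc q
  have hqw := SimpleGraph.dist_le (w.mapLe T.hor_le_graph)
  rw [SimpleGraph.Walk.length_mapLe] at hqw
  refine ⟨t, hx, hy, gromov_le_of_le_dist hx hy (by omega), w, ?_⟩
  simpa using hk _ _ _ (T.isHorizontal_mapLe w) (by rw [SimpleGraph.Walk.length_mapLe]; omega)

lemma hyperbolic_of_horizontalGeodesicsBoundedBy {k : ℕ}
    (hk : T.HorizontalGeodesicsBoundedBy k) : T.Hyperbolic := by
  refine ⟨k, k.cast_nonneg, fun x y z => ?_⟩
  obtain ⟨t₁, hx₁, hz₁, hg₁, w₁, hw₁⟩ := exists_short_hor_walk hk x z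
  obtain ⟨t₂, hz₂, hy₂, hg₂, w₂, hw₂⟩ := exists_short_hor_walk hk z y
  obtain ⟨w₁', hw₁'⟩ := exists_hor_walk_anc_of_le (min_le_left t₁ t₂) hx₁ hz₁ w₁
  obtain ⟨w₂', hw₂'⟩ := exists_hor_walk_anc_of_le (min_le_right t₁ t₂) hz₂ hy₂ w₂
  have hxy := sub_le_gromov_of_hor_walk (by omega) (by omega) (w₁'.append w₂')
  have hmin : min (T.gromov x z) (T.gromov z y) ≤ (min t₁ t₂ : ℕ) := by
    push_cast
    exact min_le_min hg₁ hg₂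
  have hlen : ((w₁'.append w₂').length : ℝ) ≤ 2 * k := by
    rw [SimpleGraph.Walk.length_append]
    exact_mod_cast (by omega)
  linarith

lemma IsHorizontal.length_le_of_hyperbolic {δ : ℝ}
    (hδ : ∀ x y z : V, min (T.gromov x z) (T.gromov z y) - δ ≤ T.gromov x y)
    {x y : V} {p : T.graph.Walk x y} (hp : T.IsHorizontal p)
    (hgeo : p.length = T.graph.dist x y) : (p.length : ℝ) ≤ 4 * δ + 1 := by
  set n := p.length / 2
  have hdrop : T.IsHorizontal (p.drop n) := fun e he =>
    hp e (List.mem_of_mem_drop (SimpleGraph.Walk.darts_drop p n ▸ he))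
  have hxz : T.graph.dist x (p.getVert n) ≤ n :=
    (SimpleGraph.dist_le _).trans ((p.take_length n).trans_le (min_le_left _ _))
  have hzy : T.graph.dist (p.getVert n) y ≤ p.length - n := by
    simpa using SimpleGraph.dist_le (p.drop n)
  have hδxyz := hδ x y (p.getVert n)
  simp only [gromov, hp.lvl_eq, hdrop.lvl_eq, ← hgeo] at hδxyz
  have h₁ : (T.graph.dist x (p.getVert n) : ℝ) ≤ n := by exact_mod_cast hxz
  have h₂ : (T.graph.dist (p.getVert n) y : ℝ) + n ≤ p.length := by exact_mod_cast (by omega)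
  have h₃ : (p.length : ℝ) ≤ 2 * n + 1 := by exact_mod_cast (by omega)
  have h₄ : (2 * n : ℝ) ≤ p.length := by exact_mod_cast (by omega)
  rcases min_choice ((T.lvl y + T.lvl y - T.graph.dist x (p.getVert n) : ℝ) / 2)
      ((T.lvl y + T.lvl y - T.graph.dist (p.getVert n) y : ℝ) / 2) with h | h <;>
    rw [h] at hδxyz <;> linarith

lemma horizontalGeodesicsBoundedBy_of_hyperbolic {δ : ℝ}
    (hδ : ∀ x y z : V, min (T.gromov x z) (T.gromov z y) - δ ≤ T.gromov x y) :
    T.HorizontalGeodesicsBoundedBy ⌈4 * δ + 1⌉₊ := fun _ _ _ hp hgeo => by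
  exact_mod_cast (hp.length_le_of_hyperbolic hδ hgeo).trans (Nat.le_ceil _)

end MoranPaper.AugmentedTree

/-- an augmented tree is hyperbolic iff the lengths of its horizontal
geodesics are uniformly bounded. -/
theorem MoranPaper.statement5 {V : Type*} (T : MoranPaper.AugmentedTree V) :
    T.Hyperbolic ↔
    ∃ k : ℕ, ∀ (x y : V) (p : T.graph.Walk x y),
      (∀ e ∈ p.darts, T.Eh e.toProd.1 e.toProd.2) →
      p.length = T.graph.dist x y → p.length ≤ k := by
  constructor
  · rintro ⟨δ, -, hδ⟩
    exact ⟨_, MoranPaper.AugmentedTree.horizontalGeodesicsBoundedBy_of_hyperbolic hδ⟩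
  · rintro ⟨k, hk⟩
    exact MoranPaper.AugmentedTree.hyperbolic_of_horizontalGeodesicsBoundedBy hk
end
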